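/- arXiv:1106.1638 — 2 statements merged into one kernel-verified Lean document; each statement's English description precedes it below -/
import Mathlib

section
/- Let ε be a standard normal random variable, let σ > 0, and let Z_σ = Φ(ε/σ), where Φ is the standard normal cumulative distribution function with inverse Φ⁻¹. Then Var(Z_σ) = 2∫₀¹ z·(1 − Φ(σ·Φ⁻¹(z))) dz − (∫₀¹ (1 − Φ(σ·Φ⁻¹(z))) dz)². -/
/-!
For `Z` with values in `[0, 1]`, the layer cake formula gives `E Z = ∫₀¹ P(Z > t) dt` and,
after the substitution `s = t²`, `E Z² = ∫₀¹ 2t P(Z > t) dt`. For `Z = Φ(ε/σ)` and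
`t ∈ (0, 1)`, the event `Z > t` is `ε > σ Φ⁻¹(t)`, because `Φ` is a strictly increasing
bijection `ℝ → (0, 1)` (its derivative is the positive Gaussian density).
Hence `P(Z > t) = 1 - Φ(σ Φ⁻¹(t))`.
-/

open MeasureTheory ProbabilityTheory

/-- The standard normal cumulative distribution function `Φ`. -/
noncomputable def stdNormalCDF (x : ℝ) : ℝ :=
  (ProbabilityTheory.gaussianReal 0 1 (Set.Iic x)).toReal

/-- The inverse `Φ⁻¹` of the standard normal cumulative distribution function. -/
noncomputable def stdNormalCDFInv : ℝ → ℝ :=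
  Function.invFun stdNormalCDF

open Set

namespace MeasureTheory

variable {α : Type*} [MeasurableSpace α] {μ : Measure α} {f : α → ℝ}

lemma setIntegral_Ioi_mul_measureReal_lt_eq_Ioo {M : ℝ} (f_bdd : f ≤ᵐ[μ] fun _ ↦ M)
    (g : ℝ → ℝ) :
    ∫ t in Ioi (0 : ℝ), g t * μ.real {a | t < f a} =
      ∫ t in Ioo 0 M, g t * μ.real {a | t < f a} := by
  refine setIntegral_eq_of_subset_of_forall_sdiff_eq_zero (measurableSet_Ioi (a := 0))
    Ioo_subset_Ioi_self fun t ht ↦ ?_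
  have hMt : M ≤ t := not_lt.mp fun htM ↦ ht.2 ⟨ht.1, htM⟩
  have : μ {a | t < f a} = 0 := by
    rw [measure_eq_zero_iff_ae_notMem]
    filter_upwards [f_bdd] with a ha using not_lt.mpr (ha.trans hMt)
  simp [measureReal_def, this]

lemma Integrable.integral_eq_integral_Ioo_measureReal_lt {M : ℝ} (f_intble : Integrable f μ)
    (f_nn : 0 ≤ᵐ[μ] f) (f_bdd : f ≤ᵐ[μ] fun _ ↦ M) :
    ∫ a, f a ∂μ = ∫ t in Ioo 0 M, μ.real {a | t < f a} := by
  have h := setIntegral_Ioi_mul_measureReal_lt_eq_Ioo f_bdd fun _ ↦ (1 : ℝ)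
  simp only [one_mul] at h
  rw [f_intble.integral_eq_integral_meas_lt f_nn, h]

lemma Integrable.integral_sq_eq_integral_mul_measureReal_lt
    (f_sq_intble : Integrable (fun a ↦ f a ^ 2) μ) (f_nn : 0 ≤ᵐ[μ] f) :
    ∫ a, f a ^ 2 ∂μ = ∫ t in Ioi 0, 2 * t * μ.real {a | t < f a} := by
  rw [f_sq_intble.integral_eq_integral_meas_lt (ae_of_all _ fun a ↦ sq_nonneg (f a)),
    ← integral_comp_rpow_Ioi _ two_ne_zero]
  refine setIntegral_congr_fun measurableSet_Ioi fun t (ht : 0 < t) ↦ ?_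
  have hset : {a | t ^ (2 : ℝ) < f a ^ 2} =ᵐ[μ] {a | t < f a} := by
    filter_upwards [f_nn] with a ha
    change (t ^ (2 : ℝ) < f a ^ 2) = (t < f a)
    rw [Real.rpow_two, pow_lt_pow_iff_left₀ ht.le ha two_ne_zero]
  rw [measureReal_congr hset]
  norm_num

end MeasureTheory

namespace ProbabilityTheory

variable {α : Type*} [MeasurableSpace α] {μ : Measure α} {f : α → ℝ}

lemma variance_eq_integral_Ioo_measureReal_lt [IsProbabilityMeasure μ] (hf : AEMeasurable f μ)
    (f_nn : 0 ≤ᵐ[μ] f) (f_le_one : f ≤ᵐ[μ] fun _ ↦ 1) :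
    variance f μ = 2 * (∫ t in Ioo 0 1, t * μ.real {a | t < f a}) -
      (∫ t in Ioo 0 1, μ.real {a | t < f a}) ^ 2 := by
  have hf_memLp : MemLp f 2 μ :=
    memLp_of_bounded (f_nn.and f_le_one) hf.aestronglyMeasurable 2
  rw [variance_eq_sub hf_memLp,
    (hf_memLp.integrable one_le_two).integral_eq_integral_Ioo_measureReal_lt f_nn f_le_one]
  simp only [Pi.pow_apply]
  rw [hf_memLp.integrable_sq.integral_sq_eq_integral_mul_measureReal_lt f_nn,
    setIntegral_Ioi_mul_measureReal_lt_eq_Ioo f_le_one, ← integral_const_mul]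
  simp only [mul_assoc]

end ProbabilityTheory

lemma stdNormalCDF_eq_cdf : stdNormalCDF = cdf (gaussianReal 0 1) := by
  ext x
  rw [cdf_eq_real, measureReal_def, stdNormalCDF]

lemma stdNormalCDF_nonneg (x : ℝ) : 0 ≤ stdNormalCDF x :=
  stdNormalCDF_eq_cdf ▸ cdf_nonneg _ x

lemma stdNormalCDF_le_one (x : ℝ) : stdNormalCDF x ≤ 1 :=
  stdNormalCDF_eq_cdf ▸ cdf_le_one _ x

lemma continuous_gaussianPDFReal (m : ℝ) (v : NNReal) : Continuous (gaussianPDFReal m v) := by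
  unfold gaussianPDFReal
  fun_prop

lemma stdNormalCDF_eq_integral (x : ℝ) :
    stdNormalCDF x = ∫ t in Iic x, gaussianPDFReal 0 1 t := by
  rw [stdNormalCDF, gaussianReal_apply_eq_integral 0 one_ne_zero,
    ENNReal.toReal_ofReal (setIntegral_nonneg measurableSet_Iic
      fun t _ ↦ gaussianPDFReal_nonneg 0 1 t)]

lemma stdNormalCDF_eq_add_intervalIntegral (x : ℝ) :
    stdNormalCDF x = stdNormalCDF 0 + ∫ t in 0..x, gaussianPDFReal 0 1 t := by
  have hpdf := integrable_gaussianPDFReal 0 1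
  rw [stdNormalCDF_eq_integral, stdNormalCDF_eq_integral,
    ← intervalIntegral.integral_Iic_sub_Iic hpdf.integrableOn hpdf.integrableOn, add_sub_cancel]

lemma hasDerivAt_stdNormalCDF (x : ℝ) : HasDerivAt stdNormalCDF (gaussianPDFReal 0 1 x) x := by
  rw [funext stdNormalCDF_eq_add_intervalIntegral]
  exact ((continuous_gaussianPDFReal 0 1).integral_hasStrictDerivAt 0 x).hasDerivAt.const_add _

lemma continuous_stdNormalCDF : Continuous stdNormalCDF :=
  continuous_iff_continuousAt.mpr fun x ↦ (hasDerivAt_stdNormalCDF x).continuousAt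

lemma strictMono_stdNormalCDF : StrictMono stdNormalCDF :=
  strictMono_of_hasDerivAt_pos hasDerivAt_stdNormalCDF
    fun x ↦ gaussianPDFReal_pos 0 1 x one_ne_zero

lemma stdNormalCDF_stdNormalCDFInv {y : ℝ} (hy : y ∈ Ioo 0 1) :
    stdNormalCDF (stdNormalCDFInv y) = y := by
  refine Function.invFun_eq (mem_range_of_exists_le_of_exists_ge continuous_stdNormalCDF ?_ ?_)
  · rw [stdNormalCDF_eq_cdf]
    exact ((tendsto_cdf_atBot _).eventually (eventually_lt_nhds hy.1)).exists.imp fun _ ↦ le_of_lt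
  · rw [stdNormalCDF_eq_cdf]
    exact ((tendsto_cdf_atTop _).eventually (eventually_gt_nhds hy.2)).exists.imp fun _ ↦ le_of_lt

lemma lt_stdNormalCDF_div_iff {y σ x : ℝ} (hy : y ∈ Ioo 0 1) (hσ : 0 < σ) :
    y < stdNormalCDF (x / σ) ↔ σ * stdNormalCDFInv y < x := by
  conv_lhs => rw [← stdNormalCDF_stdNormalCDFInv hy]
  rw [strictMono_stdNormalCDF.lt_iff_lt, lt_div_iff₀ hσ, mul_comm]

lemma gaussianReal_real_Ioi (x : ℝ) : (gaussianReal 0 1).real (Ioi x) = 1 - stdNormalCDF x := by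
  rw [← compl_Iic, probReal_compl_eq_one_sub measurableSet_Iic, stdNormalCDF, measureReal_def]

lemma measureReal_lt_stdNormalCDF_div {Ω : Type*} [MeasurableSpace Ω] {Q : Measure Ω}
    {ε : Ω → ℝ} (hε : AEMeasurable ε Q) (hεlaw : Q.map ε = gaussianReal 0 1) {σ y : ℝ}
    (hσ : 0 < σ) (hy : y ∈ Ioo 0 1) :
    Q.real {ω | y < stdNormalCDF (ε ω / σ)} = 1 - stdNormalCDF (σ * stdNormalCDFInv y) := by
  simp_rw [lt_stdNormalCDF_div_iff hy hσ]
  rw [← gaussianReal_real_Ioi, ← hεlaw,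
    map_measureReal_apply_of_aemeasurable hε measurableSet_Ioi]
  rfl

theorem gaussian_pit_variance_formula_general
    {Ω : Type*} [MeasurableSpace Ω] (Q : Measure Ω) [IsProbabilityMeasure Q]
    (ε : Ω → ℝ) (hεlaw : Q.map ε = gaussianReal 0 1)
    (σ : ℝ) (hσ : 0 < σ) :
    variance (fun ω => stdNormalCDF (ε ω / σ)) Q =
      2 * (∫ z in Set.Ioo (0 : ℝ) 1, z * (1 - stdNormalCDF (σ * stdNormalCDFInv z))) -
        (∫ z in Set.Ioo (0 : ℝ) 1, (1 - stdNormalCDF (σ * stdNormalCDFInv z))) ^ 2 := by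
  have hε : AEMeasurable ε Q := .of_map_ne_zero (hεlaw ▸ IsProbabilityMeasure.ne_zero _)
  have hZ : AEMeasurable (fun ω ↦ stdNormalCDF (ε ω / σ)) Q :=
    continuous_stdNormalCDF.measurable.comp_aemeasurable (hε.div_const σ)
  have htail : ∀ z ∈ Ioo (0 : ℝ) 1,
      Q.real {ω | z < stdNormalCDF (ε ω / σ)} = 1 - stdNormalCDF (σ * stdNormalCDFInv z) :=
    fun z hz ↦ measureReal_lt_stdNormalCDF_div hε hεlaw hσ hz
  rw [variance_eq_integral_Ioo_measureReal_lt hZ (ae_of_all _ fun _ ↦ stdNormalCDF_nonneg _)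
      (ae_of_all _ fun _ ↦ stdNormalCDF_le_one _),
    setIntegral_congr_fun measurableSet_Ioo htail,
    setIntegral_congr_fun measurableSet_Ioo fun z hz ↦ congrArg (z * ·) (htail z hz)]

/-- **equation (4) of Gneiting–Ranjan.** For standard normal `ε`, `σ > 0`
and `Z_σ = Φ(ε/σ)`,
`Var(Z_σ) = 2∫₀¹ z(1 − Φ(σΦ⁻¹(z))) dz − (∫₀¹ (1 − Φ(σΦ⁻¹(z))) dz)²`. -/
theorem gaussian_pit_variance_formula
    {Ω : Type*} [MeasurableSpace Ω] (Q : Measure Ω) [IsProbabilityMeasure Q]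
    (ε : Ω → ℝ) (hεmeas : Measurable ε) (hεlaw : Q.map ε = gaussianReal 0 1)
    (σ : ℝ) (hσ : 0 < σ) :
    variance (fun ω => stdNormalCDF (ε ω / σ)) Q =
      2 * (∫ z in Set.Ioo (0 : ℝ) 1, z * (1 - stdNormalCDF (σ * stdNormalCDFInv z))) -
        (∫ z in Set.Ioo (0 : ℝ) 1, (1 - stdNormalCDF (σ * stdNormalCDFInv z))) ^ 2 :=
  gaussian_pit_variance_formula_general Q ε hεlaw σ hσ
end

section
/- Let k ≥ 1 and let F₀, F₁, …, F_k be continuous cumulative distribution functions on ℝ such that supp(F₁) ∪ ⋯ ∪ supp(F_k) = supp(F₀). Let Y be a random variable with law F₀, and fix strictly positive weights w₁, …, w_k summing to 1. For α, β > 0 let B_{α,β} denote the cumulative distribution function of the Beta distribution with parameters α and β, and define the beta-transformed linear pool probability integral transform Z_{α,β} = B_{α,β}(Σ_{i=1}^k w_i·F_i(Y)). Then for every v ∈ (0, 1/4) there exist α > 0 and β > 0 such that Var(Z_{α,β}) = v. -/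
/-!
Put `H = ∑ wᵢ Fᵢ` and `X = H(Y) ∈ [0, 1]`. Where `H` is flat every `Fᵢ` is flat, so such an open
gap misses every `supp Fᵢ`, hence `supp F₀`; as `F₀` has no atoms, every level set of `H` is
`F₀`-null. So the law of `X` is atomless and `X` has a median `q ∈ (0, 1)`.

Along `α = 1 + s q`, `β = 1 + s (1 - q)` the Beta kernel is `(t ^ q (1 - t) ^ (1 - q)) ^ s`, whose
base is maximal exactly at `t = q`; hence `B_{α,β}(X) → 𝟙{X > q}` as `s → ∞` and the variance
tends to `P(X > q) P(X ≤ q) = 1/4`. From such a point, increasing `α` with `β` fixed sends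
`B_{α,β}(X) → 0` because `X < 1` a.s., so the variance tends to `0`. The variance is continuous
in `α` by dominated convergence, and the intermediate value theorem gives every value in between.
-/

open MeasureTheory ProbabilityTheory

/-- The cumulative distribution function of a Borel measure on `ℝ`. -/
noncomputable def cdfOf (μ : Measure ℝ) : ℝ → ℝ :=
  fun y => (μ (Set.Iic y)).toReal

/-- The (topological) support of a Borel measure on `ℝ`: the set of points all of whose
open neighbourhoods have positive measure. -/
def msupport (μ : Measure ℝ) : Set ℝ :=
  {x | ∀ U : Set ℝ, IsOpen U → x ∈ U → 0 < μ U}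

/-- The cumulative distribution function `B_{a,b}` of the Beta distribution with
parameters `a, b > 0`. -/
noncomputable def betaCDF (a b x : ℝ) : ℝ :=
  (∫ t in Set.Ioc (0 : ℝ) (min x 1), t ^ (a - 1) * (1 - t) ^ (b - 1)) /
    ∫ t in Set.Ioc (0 : ℝ) 1, t ^ (a - 1) * (1 - t) ^ (b - 1)

open Set Filter Topology

noncomputable def betaKernel (a b t : ℝ) : ℝ := t ^ (a - 1) * (1 - t) ^ (b - 1)

section BetaKernel

variable {a b t : ℝ}

lemma betaKernel_nonneg (ht0 : 0 ≤ t) (ht1 : t ≤ 1) : 0 ≤ betaKernel a b t :=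
  mul_nonneg (Real.rpow_nonneg ht0 _) (Real.rpow_nonneg (sub_nonneg.2 ht1) _)

lemma betaKernel_pos (ht0 : 0 < t) (ht1 : t < 1) : 0 < betaKernel a b t :=
  mul_pos (Real.rpow_pos_of_pos ht0 _) (Real.rpow_pos_of_pos (sub_pos.2 ht1) _)

lemma measurable_betaKernel (a b : ℝ) : Measurable (betaKernel a b) := by
  unfold betaKernel; fun_prop

lemma integrableOn_betaKernel (ha : 0 < a) (hb : 0 < b) :
    IntegrableOn (betaKernel a b) (Ioc 0 1) := by
  have h := Complex.betaIntegral_convergent (u := a) (v := b) (by simpa) (by simpa)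
  rw [intervalIntegrable_iff_integrableOn_Ioc_of_le zero_le_one] at h
  refine IntegrableOn.congr_fun (Integrable.re h) (fun t ht => ?_) measurableSet_Ioc
  have hc : (t : ℂ) ^ ((a : ℂ) - 1) * (1 - (t : ℂ)) ^ ((b : ℂ) - 1) = (betaKernel a b t : ℂ) := by
    rw [betaKernel, Complex.ofReal_mul, Complex.ofReal_cpow ht.1.le,
      Complex.ofReal_cpow (sub_nonneg.2 ht.2)]
    push_cast; rfl
  simp only [RCLike.re_to_complex, hc, Complex.ofReal_re]

lemma betaKernel_add_mul (c d s : ℝ) (ht0 : 0 < t) (ht1 : t < 1) :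
    betaKernel (a + s * c) (b + s * d) t = (t ^ c * (1 - t) ^ d) ^ s * betaKernel a b t := by
  have h1t : 0 < 1 - t := sub_pos.2 ht1
  rw [betaKernel, betaKernel, Real.mul_rpow (Real.rpow_nonneg ht0.le _)
      (Real.rpow_nonneg h1t.le _), ← Real.rpow_mul ht0.le, ← Real.rpow_mul h1t.le,
    show a + s * c - 1 = c * s + (a - 1) by ring, show b + s * d - 1 = d * s + (b - 1) by ring,
    Real.rpow_add ht0, Real.rpow_add h1t]
  ring

lemma setIntegral_betaKernel_pos (ha : 0 < a) (hb : 0 < b) {u v : ℝ} (hu : 0 ≤ u) (huv : u < v)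
    (hv : v ≤ 1) : 0 < ∫ t in Ioo u v, betaKernel a b t := by
  have hsub : Ioo u v ⊆ Ioc 0 1 := fun t ht => ⟨hu.trans_lt ht.1, ht.2.le.trans hv⟩
  rw [setIntegral_pos_iff_support_of_nonneg_ae
    (ae_restrict_of_forall_mem measurableSet_Ioo fun t ht =>
      betaKernel_nonneg (hsub ht).1.le (hsub ht).2)
    ((integrableOn_betaKernel ha hb).mono_set hsub)]
  have : Ioo u v ⊆ Function.support (betaKernel a b) ∩ Ioo u v := fun t ht =>
    ⟨(betaKernel_pos (hsub ht).1 (ht.2.trans_le hv)).ne', ht⟩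
  exact (by simp [huv] : (0 : ENNReal) < volume (Ioo u v)).trans_le (measure_mono this)

end BetaKernel

section BetaCDF

variable {a b x : ℝ}

lemma betaCDF_eq : betaCDF a b x =
    (∫ t in Ioc 0 (min x 1), betaKernel a b t) / ∫ t in Ioc 0 1, betaKernel a b t :=
  rfl

lemma integral_betaKernel_pos (ha : 0 < a) (hb : 0 < b) : 0 < ∫ t in Ioc 0 1, betaKernel a b t := by
  rw [integral_Ioc_eq_integral_Ioo]
  exact setIntegral_betaKernel_pos ha hb le_rfl one_pos le_rfl

lemma setIntegral_betaKernel_mono (ha : 0 < a) (hb : 0 < b) {s s' : Set ℝ} (hs' : MeasurableSet s')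
    (hss' : s ⊆ s') (hs'01 : s' ⊆ Ioc 0 1) :
    ∫ t in s, betaKernel a b t ≤ ∫ t in s', betaKernel a b t :=
  setIntegral_mono_set ((integrableOn_betaKernel ha hb).mono_set hs'01)
    (ae_restrict_of_forall_mem hs' fun _ ht => betaKernel_nonneg (hs'01 ht).1.le (hs'01 ht).2)
    (Eventually.of_forall hss')

lemma setIntegral_betaKernel_nonneg {s : Set ℝ} (hs : MeasurableSet s) (hs01 : s ⊆ Icc 0 1) :
    0 ≤ ∫ t in s, betaKernel a b t :=
  setIntegral_nonneg hs fun _ ht => betaKernel_nonneg (hs01 ht).1 (hs01 ht).2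

lemma betaCDF_nonneg : 0 ≤ betaCDF a b x :=
  div_nonneg (setIntegral_betaKernel_nonneg measurableSet_Ioc
      fun _ ht => ⟨ht.1.le, ht.2.trans (min_le_right _ _)⟩)
    (setIntegral_betaKernel_nonneg measurableSet_Ioc Ioc_subset_Icc_self)

lemma betaCDF_le_one (ha : 0 < a) (hb : 0 < b) : betaCDF a b x ≤ 1 :=
  div_le_one_of_le₀ (setIntegral_betaKernel_mono ha hb measurableSet_Ioc
      (Ioc_subset_Ioc le_rfl (min_le_right _ _)) subset_rfl)
    (integral_betaKernel_pos ha hb).le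

lemma betaCDF_of_nonpos (hx : x ≤ 0) : betaCDF a b x = 0 := by
  rw [betaCDF_eq, Ioc_eq_empty ((min_le_left x 1).trans hx).not_gt]
  simp

lemma betaCDF_of_one_le (ha : 0 < a) (hb : 0 < b) (hx : 1 ≤ x) : betaCDF a b x = 1 := by
  rw [betaCDF_eq, min_eq_right hx, div_self (integral_betaKernel_pos ha hb).ne']

lemma monotone_betaCDF (ha : 0 < a) (hb : 0 < b) : Monotone (betaCDF a b) := fun _ _ hxy =>
  div_le_div_of_nonneg_right
    (setIntegral_betaKernel_mono ha hb measurableSet_Ioc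
      (Ioc_subset_Ioc le_rfl (min_le_min_right _ hxy)) (Ioc_subset_Ioc le_rfl (min_le_right _ _)))
    (integral_betaKernel_pos ha hb).le

lemma one_sub_betaCDF (ha : 0 < a) (hb : 0 < b) (hx0 : 0 ≤ x) (hx1 : x ≤ 1) :
    1 - betaCDF a b x =
      (∫ t in Ioc x 1, betaKernel a b t) / ∫ t in Ioc 0 1, betaKernel a b t := by
  have hint := integrableOn_betaKernel ha hb
  have hsplit : ∫ t in Ioc 0 1, betaKernel a b t =
      (∫ t in Ioc 0 x, betaKernel a b t) + ∫ t in Ioc x 1, betaKernel a b t := by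
    rw [← setIntegral_union (Ioc_disjoint_Ioc_of_le le_rfl) measurableSet_Ioc
      (hint.mono_set (Ioc_subset_Ioc le_rfl hx1)) (hint.mono_set (Ioc_subset_Ioc hx0 le_rfl)),
      Ioc_union_Ioc_eq_Ioc hx0 hx1]
  have hpos := (integral_betaKernel_pos ha hb).ne'
  rw [betaCDF_eq, min_eq_left hx1, eq_div_iff hpos, sub_mul, div_mul_cancel₀ _ hpos, hsplit]
  ring

lemma setIntegral_betaKernel_div_le (ha : 0 < a) (hb : 0 < b) {c d u v : ℝ} (hc : 0 ≤ c)
    (hd : d ≤ 1) (hu : 0 ≤ u) (huv : u < v) (hv : v ≤ 1) :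
    (∫ t in Ioc c d, betaKernel a b t) / (∫ t in Ioc 0 1, betaKernel a b t) ≤
      (∫ t in Ioo c d, betaKernel a b t) / ∫ t in Ioo u v, betaKernel a b t := by
  rw [integral_Ioc_eq_integral_Ioo]
  exact div_le_div_of_nonneg_left
    (setIntegral_betaKernel_nonneg measurableSet_Ioo fun t ht =>
      ⟨hc.trans ht.1.le, ht.2.le.trans hd⟩)
    (setIntegral_betaKernel_pos ha hb hu huv hv)
    (setIntegral_betaKernel_mono ha hb measurableSet_Ioc
      (fun t ht => ⟨hu.trans_lt ht.1, ht.2.le.trans hv⟩) subset_rfl)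

lemma continuousAt_setIntegral_betaKernel (ha : 0 < a) {y : ℝ} (hy : y ≤ 1) (hb : 0 < b) :
    ContinuousAt (fun a' => ∫ t in Ioc 0 y, betaKernel a' b t) a := by
  apply continuousAt_of_dominated (bound := betaKernel (a / 2) b)
  · exact Eventually.of_forall fun _ => (measurable_betaKernel _ _).aestronglyMeasurable
  · filter_upwards [eventually_gt_nhds (half_lt_self ha)] with a' ha'
    refine ae_restrict_of_forall_mem measurableSet_Ioc fun t ht => ?_
    rw [Real.norm_of_nonneg (betaKernel_nonneg ht.1.le (ht.2.trans hy))]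
    exact mul_le_mul_of_nonneg_right
      (Real.rpow_le_rpow_of_exponent_ge ht.1 (ht.2.trans hy) (by linarith))
      (Real.rpow_nonneg (sub_nonneg.2 (ht.2.trans hy)) _)
  · exact (integrableOn_betaKernel (half_pos ha) hb).mono_set (Ioc_subset_Ioc le_rfl hy)
  · refine ae_restrict_of_forall_mem measurableSet_Ioc fun t ht => ?_
    exact ((Real.continuousAt_const_rpow ht.1.ne').comp (by fun_prop)).mul continuousAt_const

lemma continuousAt_betaCDF_left (ha : 0 < a) (hb : 0 < b) (x : ℝ) :
    ContinuousAt (fun a' => betaCDF a' b x) a :=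
  (continuousAt_setIntegral_betaKernel ha (min_le_right x 1) hb).div
    (continuousAt_setIntegral_betaKernel ha le_rfl hb) (integral_betaKernel_pos ha hb).ne'

end BetaCDF

section Concentration

lemma setIntegral_betaKernel_add_mul_le {a b c d R s : ℝ} {A : Set ℝ} (ha : 0 < a)
    (hb : 0 < b) (hc : 0 ≤ c) (hd : 0 ≤ d) (hs : 0 ≤ s) (hA : A ⊆ Ioo 0 1) (hAm : MeasurableSet A)
    (hAR : ∀ t ∈ A, t ^ c * (1 - t) ^ d ≤ R) :
    ∫ t in A, betaKernel (a + s * c) (b + s * d) t ≤ R ^ s * ∫ t in A, betaKernel a b t := by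
  have hAIoc := hA.trans Ioo_subset_Ioc_self
  rw [← integral_const_mul]
  refine setIntegral_mono_on ((integrableOn_betaKernel (by positivity) (by positivity)).mono_set
    hAIoc) (((integrableOn_betaKernel ha hb).mono_set hAIoc).const_mul _) hAm fun t ht => ?_
  obtain ⟨ht0, ht1⟩ := hA ht
  rw [betaKernel_add_mul c d s ht0 ht1]
  exact mul_le_mul_of_nonneg_right (Real.rpow_le_rpow (mul_nonneg (Real.rpow_nonneg ht0.le _)
    (Real.rpow_nonneg (sub_nonneg.2 ht1.le) _)) (hAR t ht) hs) (betaKernel_nonneg ht0.le ht1.le)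

lemma le_setIntegral_betaKernel_add_mul {a b c d r s : ℝ} {B : Set ℝ} (ha : 0 < a)
    (hb : 0 < b) (hc : 0 ≤ c) (hd : 0 ≤ d) (hs : 0 ≤ s) (hr : 0 ≤ r) (hB : B ⊆ Ioo 0 1)
    (hBm : MeasurableSet B) (hBr : ∀ t ∈ B, r ≤ t ^ c * (1 - t) ^ d) :
    r ^ s * ∫ t in B, betaKernel a b t ≤ ∫ t in B, betaKernel (a + s * c) (b + s * d) t := by
  have hBIoc := hB.trans Ioo_subset_Ioc_self
  rw [← integral_const_mul]
  refine setIntegral_mono_on (((integrableOn_betaKernel ha hb).mono_set hBIoc).const_mul _)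
    ((integrableOn_betaKernel (by positivity) (by positivity)).mono_set hBIoc) hBm fun t ht => ?_
  obtain ⟨ht0, ht1⟩ := hB ht
  rw [betaKernel_add_mul c d s ht0 ht1]
  exact mul_le_mul_of_nonneg_right (Real.rpow_le_rpow hr (hBr t ht) hs)
    (betaKernel_nonneg ht0.le ht1.le)

/-- Laplace's principle: under the tilt `(t ^ c * (1 - t) ^ d) ^ s`, the mass of a region where
the tilt is at most `R` becomes negligible against one where it is at least `r > R`. -/
lemma tendsto_setIntegral_betaKernel_div {a b c d R r : ℝ} {A B : Set ℝ} (ha : 0 < a) (hb : 0 < b)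
    (hc : 0 ≤ c) (hd : 0 ≤ d) (hA : A ⊆ Ioo 0 1) (hAm : MeasurableSet A) (hB : B ⊆ Ioo 0 1)
    (hBm : MeasurableSet B) (hBpos : 0 < ∫ t in B, betaKernel a b t) (hR : 0 ≤ R) (hRr : R < r)
    (hAR : ∀ t ∈ A, t ^ c * (1 - t) ^ d ≤ R) (hBr : ∀ t ∈ B, r ≤ t ^ c * (1 - t) ^ d) :
    Tendsto (fun s => (∫ t in A, betaKernel (a + s * c) (b + s * d) t) /
      ∫ t in B, betaKernel (a + s * c) (b + s * d) t) atTop (𝓝 0) := by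
  have hr : 0 < r := hR.trans_lt hRr
  set NA := ∫ t in A, betaKernel a b t
  set NB := ∫ t in B, betaKernel a b t
  have hNA : 0 ≤ NA := setIntegral_betaKernel_nonneg hAm (hA.trans Ioo_subset_Icc_self)
  have hbound : ∀ᶠ s in atTop, (∫ t in A, betaKernel (a + s * c) (b + s * d) t) /
      (∫ t in B, betaKernel (a + s * c) (b + s * d) t) ≤ (R / r) ^ s * (NA / NB) := by
    filter_upwards [eventually_ge_atTop 0] with s hs
    calc _ ≤ R ^ s * NA / (r ^ s * NB) :=
          div_le_div₀ (mul_nonneg (Real.rpow_nonneg hR _) hNA)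
            (setIntegral_betaKernel_add_mul_le ha hb hc hd hs hA hAm hAR)
            (mul_pos (Real.rpow_pos_of_pos hr _) hBpos)
            (le_setIntegral_betaKernel_add_mul ha hb hc hd hs hr.le hB hBm hBr)
      _ = (R / r) ^ s * (NA / NB) := by rw [Real.div_rpow hR hr.le]; ring
  refine squeeze_zero' (Eventually.of_forall fun s => div_nonneg
    (setIntegral_betaKernel_nonneg hAm (hA.trans Ioo_subset_Icc_self))
    (setIntegral_betaKernel_nonneg hBm (hB.trans Ioo_subset_Icc_self))) hbound ?_
  simpa using (tendsto_rpow_atTop_of_base_lt_one _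
      (by linarith [div_nonneg hR hr.le]) ((div_lt_one hr).2 hRr)).mul_const (NA / NB)

lemma strictMonoOn_rpow_mul_one_sub_rpow {q : ℝ} (hq : q ≤ 1) :
    StrictMonoOn (fun t : ℝ => t ^ q * (1 - t) ^ (1 - q)) (Ioo 0 q) := by
  intro t ht x hx htx
  have hx1 : 0 < 1 - x := by linarith [hx.2]
  have ht1 : 0 < 1 - t := by linarith [hx.2]
  have hq0 : 0 ≤ q := ht.1.le.trans ht.2.le
  have hfx : 0 < x ^ q * (1 - x) ^ (1 - q) :=
    mul_pos (Real.rpow_pos_of_pos hx.1 _) (Real.rpow_pos_of_pos hx1 _)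
  -- weighted AM-GM: the geometric mean of the ratios is below their arithmetic mean, which is `< 1`
  have hamgm : (t / x) ^ q * ((1 - t) / (1 - x)) ^ (1 - q) < 1 := by
    refine (Real.geom_mean_le_arith_mean2_weighted hq0 (sub_nonneg.2 hq)
      (div_nonneg ht.1.le hx.1.le) (div_nonneg ht1.le hx1.le) (by ring)).trans_lt ?_
    have hmean : q * (t / x) + (1 - q) * ((1 - t) / (1 - x)) =
        1 - (x - t) * (q - x) / (x * (1 - x)) := by
      have := hx.1.ne'
      have := hx1.ne'
      field_simp
      ring
    rw [hmean, sub_lt_self_iff]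
    exact div_pos (mul_pos (sub_pos.2 htx) (sub_pos.2 hx.2)) (mul_pos hx.1 hx1)
  calc t ^ q * (1 - t) ^ (1 - q)
      = x ^ q * (1 - x) ^ (1 - q) * ((t / x) ^ q * ((1 - t) / (1 - x)) ^ (1 - q)) := by
        have := (Real.rpow_pos_of_pos hx.1 q).ne'
        have := (Real.rpow_pos_of_pos hx1 (1 - q)).ne'
        rw [Real.div_rpow ht.1.le hx.1.le, Real.div_rpow ht1.le hx1.le]
        field_simp
    _ < x ^ q * (1 - x) ^ (1 - q) := mul_lt_of_lt_one_right hfx hamgm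

lemma strictAntiOn_rpow_mul_one_sub_rpow {q : ℝ} (hq : 0 ≤ q) :
    StrictAntiOn (fun t : ℝ => t ^ q * (1 - t) ^ (1 - q)) (Ioo q 1) := by
  intro t ht x hx htx
  have h := strictMonoOn_rpow_mul_one_sub_rpow (q := 1 - q) (by linarith)
    (a := 1 - x) ⟨by linarith [hx.2], by linarith [hx.1]⟩
    (b := 1 - t) ⟨by linarith [ht.2], by linarith [ht.1]⟩ (by linarith)
  simp only [sub_sub_cancel] at h
  linarith [mul_comm (x ^ q) ((1 - x) ^ (1 - q)), mul_comm (t ^ q) ((1 - t) ^ (1 - q))]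

variable {q x : ℝ}

lemma tendsto_betaCDF_of_lt (hq0 : 0 < q) (hq1 : q < 1) (hx : x < q) :
    Tendsto (fun s => betaCDF (1 + s * q) (1 + s * (1 - q)) x) atTop (𝓝 0) := by
  rcases le_or_gt x 0 with hx0 | hx0
  · simp only [betaCDF_of_nonpos hx0, tendsto_const_nhds]
  obtain ⟨u, hxu, huq⟩ := exists_between hx
  have hmono := strictMonoOn_rpow_mul_one_sub_rpow hq1.le
  have hlim := tendsto_setIntegral_betaKernel_div one_pos one_pos hq0.le (sub_nonneg.2 hq1.le)
    (Ioo_subset_Ioo_right (hx.trans hq1).le) measurableSet_Ioo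
    (Ioo_subset_Ioo (hx0.trans hxu).le hq1.le) measurableSet_Ioo
    (setIntegral_betaKernel_pos one_pos one_pos (hx0.trans hxu).le huq hq1.le)
    (mul_nonneg (Real.rpow_nonneg hx0.le _) (Real.rpow_nonneg (by linarith) _))
    (hmono ⟨hx0, hx⟩ ⟨hx0.trans hxu, huq⟩ hxu)
    (fun t ht => (hmono ⟨ht.1, ht.2.trans hx⟩ ⟨hx0, hx⟩ ht.2).le)
    (fun t ht => (hmono ⟨hx0.trans hxu, huq⟩ ⟨(hx0.trans hxu).trans ht.1, ht.2⟩ ht.1).le)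
  refine squeeze_zero' (Eventually.of_forall fun _ => betaCDF_nonneg) ?_ hlim
  filter_upwards [eventually_ge_atTop 0] with s hs
  rw [betaCDF_eq, min_eq_left (hx.trans hq1).le]
  exact setIntegral_betaKernel_div_le (by positivity) (by nlinarith) le_rfl (hx.trans hq1).le
    (hx0.trans hxu).le huq hq1.le

lemma tendsto_betaCDF_of_gt (hq0 : 0 < q) (hq1 : q < 1) (hx : q < x) :
    Tendsto (fun s => betaCDF (1 + s * q) (1 + s * (1 - q)) x) atTop (𝓝 1) := by
  rcases le_or_gt 1 x with hx1 | hx1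
  · refine tendsto_const_nhds.congr' ?_
    filter_upwards [eventually_ge_atTop 0] with s hs
    exact (betaCDF_of_one_le (by positivity) (by nlinarith) hx1).symm
  obtain ⟨u, hqu, hux⟩ := exists_between hx
  have hanti := strictAntiOn_rpow_mul_one_sub_rpow hq0.le
  have hlim := tendsto_setIntegral_betaKernel_div one_pos one_pos hq0.le (sub_nonneg.2 hq1.le)
    (Ioo_subset_Ioo_left (hq0.trans hx).le) measurableSet_Ioo
    (Ioo_subset_Ioo hq0.le (hux.trans hx1).le) measurableSet_Ioo
    (setIntegral_betaKernel_pos one_pos one_pos hq0.le hqu (hux.trans hx1).le)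
    (mul_nonneg (Real.rpow_nonneg (hq0.trans hx).le _) (Real.rpow_nonneg (by linarith) _))
    (hanti ⟨hqu, hux.trans hx1⟩ ⟨hx, hx1⟩ hux)
    (fun t ht => (hanti ⟨hx, hx1⟩ ⟨hx.trans ht.1, ht.2⟩ ht.1).le)
    (fun t ht => (hanti ⟨ht.1, ht.2.trans (hux.trans hx1)⟩ ⟨hqu, hux.trans hx1⟩ ht.2).le)
  have hcompl : Tendsto (fun s => 1 - betaCDF (1 + s * q) (1 + s * (1 - q)) x) atTop (𝓝 0) := by
    refine squeeze_zero' ?_ ?_ hlim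
    · filter_upwards [eventually_ge_atTop 0] with s hs
      exact sub_nonneg.2 (betaCDF_le_one (by positivity) (by nlinarith))
    · filter_upwards [eventually_ge_atTop 0] with s hs
      rw [one_sub_betaCDF (by positivity) (by nlinarith) (hq0.trans hx).le hx1.le]
      exact setIntegral_betaKernel_div_le (by positivity) (by nlinarith) (hq0.trans hx).le le_rfl
        hq0.le hqu (hux.trans hx1).le
  simpa using (tendsto_const_nhds (x := (1 : ℝ))).sub hcompl

lemma tendsto_betaCDF_add_atTop {a b : ℝ} (ha : 0 < a) (hb : 0 < b) (hx : x < 1) :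
    Tendsto (fun s => betaCDF (a + s) b x) atTop (𝓝 0) := by
  rcases le_or_gt x 0 with hx0 | hx0
  · simp only [betaCDF_of_nonpos hx0, tendsto_const_nhds]
  obtain ⟨u, hxu, hu1⟩ := exists_between hx
  have hlim := tendsto_setIntegral_betaKernel_div ha hb zero_le_one le_rfl
    (Ioo_subset_Ioo_right hx.le) measurableSet_Ioo
    (Ioo_subset_Ioo (hx0.trans hxu).le le_rfl) measurableSet_Ioo
    (setIntegral_betaKernel_pos ha hb (hx0.trans hxu).le hu1 le_rfl) hx0.le hxu
    (fun t ht => by simpa using ht.2.le) (fun t ht => by simpa using ht.1.le)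
  simp only [mul_one, mul_zero, add_zero] at hlim
  refine squeeze_zero' (Eventually.of_forall fun _ => betaCDF_nonneg) ?_ hlim
  filter_upwards [eventually_ge_atTop 0] with s hs
  rw [betaCDF_eq, min_eq_left hx.le]
  exact setIntegral_betaKernel_div_le (by positivity) hb le_rfl hx.le (hx0.trans hxu).le hu1 le_rfl

end Concentration

section Variance

variable {Ω : Type*} [MeasurableSpace Ω] {Q : Measure Ω} [IsProbabilityMeasure Q]

lemma tendsto_variance_of_tendsto {ι : Type*} {l : Filter ι} [l.IsCountablyGenerated] [l.NeBot]
    {Z : ι → Ω → ℝ} {Z' : Ω → ℝ} {C : ℝ} (hZ : ∀ᶠ i in l, AEStronglyMeasurable (Z i) Q)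
    (hZC : ∀ᶠ i in l, ∀ ω, ‖Z i ω‖ ≤ C) (hZ' : AEStronglyMeasurable Z' Q)
    (hlim : ∀ᵐ ω ∂Q, Tendsto (fun i => Z i ω) l (𝓝 (Z' ω))) :
    Tendsto (fun i => variance (Z i) Q) l (𝓝 (variance Z' Q)) := by
  have hZ'C : ∀ᵐ ω ∂Q, ‖Z' ω‖ ≤ C := hlim.mono fun ω hω =>
    le_of_tendsto hω.norm (hZC.mono fun i hi => hi ω)
  have hsq : ∀ {f : Ω → ℝ}, (∀ᵐ ω ∂Q, ‖f ω‖ ≤ C) → ∀ᵐ ω ∂Q, ‖(f ^ 2) ω‖ ≤ C ^ 2 :=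
    fun hf => hf.mono fun ω hω => by
      rw [Pi.pow_apply, norm_pow]; exact pow_le_pow_left₀ (norm_nonneg _) hω 2
  have hmean : Tendsto (fun i => ∫ ω, Z i ω ∂Q) l (𝓝 (∫ ω, Z' ω ∂Q)) :=
    tendsto_integral_filter_of_dominated_convergence (fun _ => C) hZ
      (hZC.mono fun i hi => ae_of_all _ hi) (integrable_const C) hlim
  have hmoment : Tendsto (fun i => ∫ ω, (Z i ^ 2) ω ∂Q) l (𝓝 (∫ ω, (Z' ^ 2) ω ∂Q)) :=
    tendsto_integral_filter_of_dominated_convergence (fun _ => C ^ 2)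
      (hZ.mono fun i hi => hi.pow 2) (hZC.mono fun i hi => hsq (ae_of_all _ hi))
      (integrable_const _) (hlim.mono fun ω hω => hω.pow 2)
  rw [variance_eq_sub (MemLp.of_bound hZ' C hZ'C)]
  refine (hmoment.sub (hmean.pow 2)).congr' ?_
  filter_upwards [hZ, hZC] with i hi hiC
  rw [variance_eq_sub (MemLp.of_bound hi C (ae_of_all _ hiC))]

lemma variance_indicator_one {s : Set Ω} (hs : MeasurableSet s) :
    variance (s.indicator 1) Q = Q.real s * (1 - Q.real s) := by
  have hsq : (s.indicator 1 : Ω → ℝ) ^ 2 = s.indicator 1 := by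
    ext ω; by_cases hω : ω ∈ s <;> simp [hω]
  rw [variance_eq_sub ((memLp_const (1 : ℝ)).indicator hs : MemLp (s.indicator 1) 2 Q), hsq,
    integral_indicator_one hs]
  ring

variable {X : Ω → ℝ}

lemma tendsto_variance_betaCDF_comp {ι : Type*} {l : Filter ι} [l.IsCountablyGenerated] [l.NeBot]
    {a b : ι → ℝ} {Z' : Ω → ℝ} (hX : Measurable X) (hab : ∀ᶠ i in l, 0 < a i ∧ 0 < b i)
    (hZ' : AEStronglyMeasurable Z' Q)
    (hlim : ∀ᵐ ω ∂Q, Tendsto (fun i => betaCDF (a i) (b i) (X ω)) l (𝓝 (Z' ω))) :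
    Tendsto (fun i => variance (fun ω => betaCDF (a i) (b i) (X ω)) Q) l (𝓝 (variance Z' Q)) :=
  tendsto_variance_of_tendsto (C := 1)
    (hab.mono fun _ h => ((monotone_betaCDF h.1 h.2).measurable.comp hX).aestronglyMeasurable)
    (hab.mono fun _ h ω => by
      rw [Real.norm_of_nonneg betaCDF_nonneg]; exact betaCDF_le_one h.1 h.2)
    hZ' hlim

lemma tendsto_variance_betaCDF_comp_concentrating (hX : Measurable X) {q : ℝ} (hq0 : 0 < q)
    (hq1 : q < 1) (hXq : ∀ᵐ ω ∂Q, X ω ≠ q) :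
    Tendsto (fun s => variance (fun ω => betaCDF (1 + s * q) (1 + s * (1 - q)) (X ω)) Q) atTop
      (𝓝 (Q.real {ω | q < X ω} * (1 - Q.real {ω | q < X ω}))) := by
  have hE : MeasurableSet {ω | q < X ω} := measurableSet_lt measurable_const hX
  rw [← variance_indicator_one hE]
  refine tendsto_variance_betaCDF_comp hX
    ((eventually_ge_atTop 0).mono fun s hs => ⟨by positivity, by nlinarith⟩)
    (measurable_const.indicator hE).aestronglyMeasurable (hXq.mono fun ω hω => ?_)
  rcases lt_or_gt_of_ne hω with h | h
  · simpa [h.not_gt] using tendsto_betaCDF_of_lt hq0 hq1 h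
  · simpa [h] using tendsto_betaCDF_of_gt hq0 hq1 h

lemma tendsto_variance_betaCDF_add_comp (hX : Measurable X) {a b : ℝ} (ha : 0 < a) (hb : 0 < b)
    (hX1 : ∀ᵐ ω ∂Q, X ω < 1) :
    Tendsto (fun r => variance (fun ω => betaCDF (a + r) b (X ω)) Q) atTop (𝓝 0) := by
  simpa using tendsto_variance_betaCDF_comp (Z' := 0) hX
    ((eventually_ge_atTop 0).mono fun r hr => ⟨by positivity, hb⟩) aestronglyMeasurable_const
    (hX1.mono fun ω h => tendsto_betaCDF_add_atTop ha hb h)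

lemma continuousAt_variance_betaCDF_comp_left (hX : Measurable X) {a b : ℝ} (ha : 0 < a)
    (hb : 0 < b) : ContinuousAt (fun a => variance (fun ω => betaCDF a b (X ω)) Q) a :=
  tendsto_variance_betaCDF_comp hX ((eventually_gt_nhds ha).mono fun _ ha => ⟨ha, hb⟩)
    ((monotone_betaCDF ha hb).measurable.comp hX).aestronglyMeasurable
    (ae_of_all _ fun ω => continuousAt_betaCDF_left ha hb (X ω))

end Variance

lemma continuousAt_cdf_iff (μ : Measure ℝ) [IsProbabilityMeasure μ] (x : ℝ) :
    ContinuousAt (cdf μ) x ↔ μ {x} = 0 := by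
  rw [continuousAt_iff_continuous_left_right, ← continuousWithinAt_Iio_iff_Iic,
    (monotone_cdf μ).continuousWithinAt_Iio_iff_leftLim_eq,
    show μ {x} = (cdf μ).measure {x} by rw [measure_cdf], StieltjesFunction.measure_singleton,
    ENNReal.ofReal_eq_zero, sub_nonpos]
  simp only [(cdf μ).right_continuous x, and_true]
  exact ⟨fun h => h.ge, fun h => le_antisymm ((monotone_cdf μ).leftLim_le le_rfl) h⟩

lemma exists_cdf_eq_half {ν : Measure ℝ} [IsProbabilityMeasure ν] [NullSingletonClass ν]
    (h01 : ∀ᵐ x ∂ν, x ∈ Icc 0 1) : ∃ q ∈ Ioo 0 1, cdf ν q = 1 / 2 := by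
  have hcont : Continuous (cdf ν) := continuous_iff_continuousAt.2 fun x =>
    (continuousAt_cdf_iff ν x).2 (measure_singleton x)
  have h0 : cdf ν 0 = 0 := by
    rw [cdf_eq_real, measureReal_eq_zero_iff]
    refine measure_mono_null (fun x hx => ?_)
      (measure_union_null (measure_singleton 0) (ae_iff.1 h01))
    rcases (mem_Iic.1 hx).lt_or_eq with h | h
    · exact Or.inr fun hx01 => h.not_ge hx01.1
    · exact Or.inl h
  have h1 : cdf ν 1 = 1 := by
    rw [cdf_eq_real, measureReal_def, (prob_compl_eq_zero_iff measurableSet_Iic).1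
      (measure_mono_null (fun x hx (hx01 : x ∈ Icc 0 1) => hx hx01.2) (ae_iff.1 h01)),
      ENNReal.toReal_one]
  obtain ⟨q, hq⟩ := intermediate_value_univ 0 1 hcont
    (show (1 / 2 : ℝ) ∈ Icc (cdf ν 0) (cdf ν 1) by rw [h0, h1]; norm_num)
  refine ⟨q, ⟨?_, ?_⟩, hq⟩
  · by_contra! h
    linarith [monotone_cdf ν h]
  · by_contra! h
    linarith [monotone_cdf ν h]

theorem exists_variance_betaCDF_comp_eq {Ω : Type*} [MeasurableSpace Ω] {Q : Measure Ω}
    [IsProbabilityMeasure Q] {X : Ω → ℝ} (hX : Measurable X) (hX01 : ∀ ω, X ω ∈ Icc 0 1)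
    [NullSingletonClass (Q.map X)] {v : ℝ} (hv : v ∈ Ioo 0 (1 / 4)) :
    ∃ a b, 0 < a ∧ 0 < b ∧ variance (fun ω => betaCDF a b (X ω)) Q = v := by
  have := Measure.isProbabilityMeasure_map (μ := Q) hX.aemeasurable
  obtain ⟨q, ⟨hq0, hq1⟩, hmed⟩ := exists_cdf_eq_half (ν := Q.map X)
    ((ae_map_iff hX.aemeasurable measurableSet_Icc).2 (ae_of_all _ hX01))
  have hXne : ∀ t, ∀ᵐ ω ∂Q, X ω ≠ t := fun t => ae_of_ae_map hX.aemeasurable (Measure.ae_ne _ t)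
  have hhalf : Q.real {ω | q < X ω} = 1 / 2 := by
    rw [show {ω | q < X ω} = X ⁻¹' (Iic q)ᶜ by ext; simp,
      ← map_measureReal_apply hX measurableSet_Iic.compl,
      probReal_compl_eq_one_sub measurableSet_Iic, ← cdf_eq_real, hmed]
    norm_num
  have hquarter := tendsto_variance_betaCDF_comp_concentrating hX hq0 hq1 (hXne q)
  rw [hhalf, show (1 / 2 : ℝ) * (1 - 1 / 2) = 1 / 4 by norm_num] at hquarter
  obtain ⟨s, hs, hs0⟩ :=
    ((hquarter.eventually (eventually_gt_nhds hv.2)).and (eventually_ge_atTop 0)).exists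
  set a₀ := 1 + s * q
  set b₀ := 1 + s * (1 - q)
  have ha₀ : 0 < a₀ := by positivity
  have hb₀ : 0 < b₀ := by nlinarith
  have hzero := tendsto_variance_betaCDF_add_comp hX ha₀ hb₀
    ((hXne 1).mono fun ω h => (hX01 ω).2.lt_of_ne h)
  obtain ⟨r, hr, hr0⟩ :=
    ((hzero.eventually (eventually_lt_nhds hv.1)).and (eventually_ge_atTop 0)).exists
  have hcont : ContinuousOn (fun r => variance (fun ω => betaCDF (a₀ + r) b₀ (X ω)) Q)
      (Icc 0 r) := fun r' hr' =>
    ((continuousAt_variance_betaCDF_comp_left hX (by linarith [hr'.1]) hb₀).comp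
      (continuous_const_add a₀).continuousAt).continuousWithinAt
  obtain ⟨r', hr', hvr'⟩ := intermediate_value_Icc' hr0 hcont ⟨hr.le, by simpa using hs.le⟩
  exact ⟨a₀ + r', b₀, by linarith [hr'.1], hb₀, hvr'⟩

lemma cdfOf_eq_cdf (μ : Measure ℝ) [IsProbabilityMeasure μ] : cdfOf μ = cdf μ := by
  ext y
  rw [cdf_eq_real]
  rfl

lemma msupport_eq_support (μ : Measure ℝ) : msupport μ = μ.support := by
  ext x
  rw [Measure.mem_support_iff_forall]
  refine ⟨fun h U hU => ?_, fun h U hUo hxU => h U (hUo.mem_nhds hxU)⟩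
  obtain ⟨V, hVU, hVo, hxV⟩ := mem_nhds_iff.1 hU
  exact (h V hVo hxV).trans_le (measure_mono hVU)

/-- A set whose gaps are all null is null: only its (at most two) extreme points can lie in the
support, and those are atoms. -/
lemma measure_eq_zero_of_forall_measure_Ioo_eq_zero {μ : Measure ℝ} [NullSingletonClass μ]
    {S : Set ℝ} (h : ∀ p ∈ S, ∀ r ∈ S, μ (Ioo p r) = 0) : μ S = 0 := by
  have hcover : S ⊆ μ.supportᶜ ∪ {z ∈ S | ∀ p ∈ S, z ≤ p} ∪ {z ∈ S | ∀ r ∈ S, r ≤ z} := by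
    intro z hz
    by_contra hcon
    simp only [mem_union, mem_compl_iff, mem_sep_iff, not_or, not_not, not_and, not_forall,
      not_le] at hcon
    obtain ⟨⟨hzs, hp⟩, hr⟩ := hcon
    obtain ⟨p, hpS, hpz⟩ := hp hz
    obtain ⟨r, hrS, hzr⟩ := hr hz
    exact Measure.subset_compl_support_of_isOpen isOpen_Ioo (h p hpS r hrS) ⟨hpz, hzr⟩ hzs
  refine measure_mono_null hcover
    (measure_union_null (measure_union_null μ.measure_compl_support ?_) ?_)
  · exact Set.Subsingleton.measure_zero (fun x hx y hy => le_antisymm (hx.2 y hy.1) (hy.2 x hx.1)) μ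
  · exact Set.Subsingleton.measure_zero (fun x hx y hy => le_antisymm (hy.2 x hx.1) (hx.2 y hy.1)) μ

lemma measure_Ioo_eq_zero_of_sum_mul_cdf_eq {k : ℕ} {μ : Measure ℝ} {μc : ℕ → Measure ℝ}
    (hprob : ∀ i < k, IsProbabilityMeasure (μc i))
    (hsupp : μ.support ⊆ ⋃ i ∈ Finset.range k, (μc i).support) {w : ℕ → ℝ}
    (hw : ∀ i < k, 0 < w i) {p r : ℝ}
    (hpr : ∑ i ∈ Finset.range k, w i * cdf (μc i) p = ∑ i ∈ Finset.range k, w i * cdf (μc i) r) :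
    μ (Ioo p r) = 0 := by
  rcases le_or_gt r p with hrp | hpr'
  · rw [Ioo_eq_empty hrp.not_gt, measure_empty]
  have hterm : ∀ i ∈ Finset.range k, 0 ≤ w i * (cdf (μc i) r - cdf (μc i) p) := fun i hi =>
    mul_nonneg (hw i (Finset.mem_range.1 hi)).le (sub_nonneg.2 (monotone_cdf _ hpr'.le))
  have hsum : ∑ i ∈ Finset.range k, w i * (cdf (μc i) r - cdf (μc i) p) = 0 := by
    simp only [mul_sub, Finset.sum_sub_distrib, hpr, sub_self]
  have hflat : ∀ i < k, μc i (Ioo p r) = 0 := fun i hi => by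
    have := hprob i hi
    have hi' := (Finset.sum_eq_zero_iff_of_nonneg hterm).1 hsum i (Finset.mem_range.2 hi)
    refine measure_mono_null Ioo_subset_Ioc_self ?_
    rw [← measure_cdf (μc i), StieltjesFunction.measure_Ioc,
      (mul_eq_zero.1 hi').resolve_left (hw i hi).ne', ENNReal.ofReal_zero]
  refine measure_mono_null (t := μ.supportᶜ) (fun z hz hzμ => ?_) μ.measure_compl_support
  obtain ⟨i, hi, hzi⟩ := mem_iUnion₂.1 (hsupp hzμ)
  exact Measure.subset_compl_support_of_isOpen isOpen_Ioo (hflat i (Finset.mem_range.1 hi)) hz hzi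

theorem blp_variance_attains_values_general
    {Ω : Type*} [MeasurableSpace Ω] (Q : Measure Ω) [IsProbabilityMeasure Q]
    (k : ℕ)
    (μ0 : Measure ℝ) [IsProbabilityMeasure μ0]
    (F0 : ℝ → ℝ) (hF0 : F0 = cdfOf μ0) (hF0cont : Continuous F0)
    (μc : ℕ → Measure ℝ) (hprob : ∀ i < k, IsProbabilityMeasure (μc i))
    (F : ℕ → ℝ → ℝ) (hF : ∀ i < k, F i = cdfOf (μc i))
    (hFcont : ∀ i < k, Continuous (F i))
    (hsupp : (⋃ i ∈ Finset.range k, msupport (μc i)) = msupport μ0)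
    (w : ℕ → ℝ) (hw : ∀ i < k, 0 < w i) (hw1 : ∑ i ∈ Finset.range k, w i = 1)
    (Y : Ω → ℝ) (hYmeas : Measurable Y) (hYlaw : Q.map Y = μ0) :
    ∀ v ∈ Set.Ioo (0 : ℝ) (1 / 4),
      ∃ a b : ℝ, 0 < a ∧ 0 < b ∧
        variance
          (fun ω => betaCDF a b (∑ i ∈ Finset.range k, w i * F i (Y ω))) Q = v := by
  intro v hv
  set H : ℝ → ℝ := fun y => ∑ i ∈ Finset.range k, w i * F i y
  have hH : ∀ y, H y = ∑ i ∈ Finset.range k, w i * cdf (μc i) y := fun y =>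
    Finset.sum_congr rfl fun i hi => by
      have := hprob i (Finset.mem_range.1 hi)
      rw [hF i (Finset.mem_range.1 hi), cdfOf_eq_cdf]
  have hHcont : Continuous H :=
    continuous_finsetSum _ fun i hi => continuous_const.mul (hFcont i (Finset.mem_range.1 hi))
  have hH01 : ∀ y, H y ∈ Icc 0 1 := fun y => by
    rw [hH]
    exact ⟨Finset.sum_nonneg fun i hi =>
        mul_nonneg (hw i (Finset.mem_range.1 hi)).le (cdf_nonneg _ _),
      (Finset.sum_le_sum fun i hi =>
        mul_le_of_le_one_right (hw i (Finset.mem_range.1 hi)).le (cdf_le_one _ _)).trans_eq hw1⟩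
  have : NullSingletonClass μ0 := ⟨fun y => (continuousAt_cdf_iff μ0 y).1
    (by rw [← cdfOf_eq_cdf, ← hF0]; exact hF0cont.continuousAt)⟩
  have hsupp' : μ0.support ⊆ ⋃ i ∈ Finset.range k, (μc i).support := by
    simpa only [msupport_eq_support] using hsupp.ge
  have hlevel : ∀ t, μ0 (H ⁻¹' {t}) = 0 := fun t =>
    measure_eq_zero_of_forall_measure_Ioo_eq_zero fun p hp r hr =>
      measure_Ioo_eq_zero_of_sum_mul_cdf_eq hprob hsupp' hw
        (by rw [← hH, ← hH, (hp : H p = t), (hr : H r = t)])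
  have : NullSingletonClass (Q.map (H ∘ Y)) := ⟨fun t => by
    rw [← Measure.map_map hHcont.measurable hYmeas, hYlaw,
      Measure.map_apply hHcont.measurable (measurableSet_singleton t)]
    exact hlevel t⟩
  exact exists_variance_betaCDF_comp_eq (hHcont.measurable.comp hYmeas) (fun ω => hH01 (Y ω)) hv

/-- **Proposition 9 of Gneiting–Ranjan.** For continuous cumulative
distribution functions `F₁, …, F_k` whose supports unite to the support of the law `F₀`
of the observation `Y`, fixed strictly positive weights summing to one, and the
beta-transformed linear pool PIT `Z_{α,β} = B_{α,β}(Σᵢ wᵢ Fᵢ(Y))`: as `α, β > 0` vary,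
`Var(Z_{α,β})` attains every value in `(0, 1/4)`. (Components are indexed by
`0, …, k−1` here.) -/
theorem blp_variance_attains_values
    {Ω : Type*} [MeasurableSpace Ω] (Q : Measure Ω) [IsProbabilityMeasure Q]
    (k : ℕ) (hk : 1 ≤ k)
    (μ0 : Measure ℝ) [IsProbabilityMeasure μ0]
    (F0 : ℝ → ℝ) (hF0 : F0 = cdfOf μ0) (hF0cont : Continuous F0)
    (μc : ℕ → Measure ℝ) (hprob : ∀ i < k, IsProbabilityMeasure (μc i))
    (F : ℕ → ℝ → ℝ) (hF : ∀ i < k, F i = cdfOf (μc i))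
    (hFcont : ∀ i < k, Continuous (F i))
    (hsupp : (⋃ i ∈ Finset.range k, msupport (μc i)) = msupport μ0)
    (w : ℕ → ℝ) (hw : ∀ i < k, 0 < w i) (hw1 : ∑ i ∈ Finset.range k, w i = 1)
    (Y : Ω → ℝ) (hYmeas : Measurable Y) (hYlaw : Q.map Y = μ0) :
    ∀ v ∈ Set.Ioo (0 : ℝ) (1 / 4),
      ∃ a b : ℝ, 0 < a ∧ 0 < b ∧
        variance
          (fun ω => betaCDF a b (∑ i ∈ Finset.range k, w i * F i (Y ω))) Q = v :=
  blp_variance_attains_values_general Q k μ0 F0 hF0 hF0cont μc hprob F hF hFcont hsupp w hw hw1 Y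
    hYmeas hYlaw
end
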